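/- Let J = [a,b) carry w_{n−l} in the construction, let x ∈ (1/2)J_{k−1}^{(3)} (the left half of the tail interval of J), and for 0 ≤ m ≤ k−2 let J_m be the right subinterval of J of length 3^{−m}|J|. Then H(wχ_{J_m∖J_{m+1}})(x) = ∫_{J_m∖J_{m+1}} w(y)/(x−y) dy ≥ w(J_m^{(2)})/|J_m| = (2/3)·2^l, and consequently B(x) := Σ_{m=0}^{k−2} H(wχ_{J_m∖J_{m+1}})(x) ≥ (2/3)(k−1)·2^l. -/

import Mathlib

open MeasureTheory

/-- `ε = 3^{-k}`. -/
noncomputable def eps (k : ℕ) : ℝ := (3:ℝ) ^ (-(k:ℤ))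

/-- `p = (1/(3ε))((1+ε)/2 + 4ε²/(1+ε))`. -/
noncomputable def pp (k : ℕ) : ℝ := (1/(3 * eps k)) * ((1 + eps k)/2 + 4 * (eps k)^2/(1 + eps k))

/-- `u = √p + √(p−1)`, the larger root of `u + 1/u = 2√p`. -/
noncomputable def uu (k : ℕ) : ℝ := Real.sqrt (pp k) + Real.sqrt (pp k - 1)

/-- The recursively defined weights `w_ν(ω, σ, I)` of the paper, on `I = [a, a+h)`
(the dual parameter `σ` is determined by `ωσ = p` and is omitted).
`W k ν ω a h` equals `w_ν(ω, p/ω, [a, a+h))` and vanishes outside `[a, a+h)`.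

For `ν = 0`: `w₀ = (ω/√p)(u χ_{I₋} + u⁻¹ χ_{I₊})`.

For `ν ≥ 1`, with `I_m` the right subinterval of `I` of length `3^{-m}|I|` and `J^{(i)}`
the `i`-th third of `J`:
`w_ν = (ω/p)(Σ_{m=0}^{k-2} χ_{I_m^{(1)}} + χ_{I_{k-1}^{(1)} ∪ I_{k-1}^{(2)}}
+ (4ε/(1+ε)) χ_{I_{k-1}^{(3)}}) + Σ_{m=0}^{k-2} w_{ν-1}(2ω, σ/2, I_m^{(2)})`. -/
noncomputable def W (k : ℕ) : ℕ → ℝ → ℝ → ℝ → ℝ → ℝ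
  | 0, ω, a, h, x =>
      Set.indicator (Set.Ico a (a + h/2)) (fun _ => ω / Real.sqrt (pp k) * uu k) x +
      Set.indicator (Set.Ico (a + h/2) (a + h)) (fun _ => ω / Real.sqrt (pp k) / uu k) x
  | (ν+1), ω, a, h, x =>
      (∑ m ∈ Finset.range (k-1),
        Set.indicator (Set.Ico (a + h - (3:ℝ)^(-(m:ℤ))*h) (a + h - (2/3)*(3:ℝ)^(-(m:ℤ))*h))
          (fun _ => ω / pp k) x) +
      Set.indicator (Set.Ico (a + h - (3:ℝ)^(1-(k:ℤ))*h) (a + h - (1/3)*(3:ℝ)^(1-(k:ℤ))*h))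
        (fun _ => ω / pp k) x +
      Set.indicator (Set.Ico (a + h - (1/3)*(3:ℝ)^(1-(k:ℤ))*h) (a + h))
        (fun _ => (4 * eps k/(1 + eps k)) * (ω / pp k)) x +
      ∑ m ∈ Finset.range (k-1),
        W k ν (2*ω) (a + h - (2/3)*(3:ℝ)^(-(m:ℤ))*h) ((1/3)*(3:ℝ)^(-(m:ℤ))*h) x

/-! Each `y ∈ J_m ∖ J_{m+1}` lies to the left of `x` at distance at most `|J_m|`, so as `w ≥ 0` the
integral over `J_m ∖ J_{m+1}` is at least `w(J_m^{(2)}) / |J_m|`. On the middle third `J_m^{(2)}`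
the weight dominates `w_{ν-1}(2ω, J_m^{(2)})`, and every weight `w_ν(ω, I)` has total mass `ω|I|`:
for `ν = 0` this is `u + 1/u = 2√p`, and the inductive step is the defining relation
`3εp = (1+ε)/2 + 4ε²/(1+ε)` of `p`. -/

open Set

lemma eps_pos (k : ℕ) : 0 < eps k := by unfold eps; positivity

lemma eps_le_one_ninth {k : ℕ} (hk : 2 ≤ k) : eps k ≤ 1 / 9 := by
  have : (3:ℝ) ^ (-(k:ℤ)) ≤ 3 ^ (-2:ℤ) := zpow_le_zpow_right₀ (by norm_num) (by omega)
  exact this.trans_eq (by norm_num)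

lemma three_zpow_one_sub (k : ℕ) : (3:ℝ) ^ (1 - (k:ℤ)) = 3 * eps k := by
  rw [eps, zpow_sub₀ (by norm_num), zpow_neg, zpow_one, div_eq_mul_inv]

lemma three_mul_eps_mul_pp (k : ℕ) :
    3 * eps k * pp k = (1 + eps k) / 2 + 4 * eps k ^ 2 / (1 + eps k) := by
  have := (eps_pos k).ne'
  unfold pp; field_simp

lemma pp_pos (k : ℕ) : 0 < pp k := by
  have := eps_pos k
  unfold pp; positivity

lemma one_le_pp {k : ℕ} (hk : 2 ≤ k) : 1 ≤ pp k := by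
  have hε := eps_pos k
  have hε' := eps_le_one_ninth hk
  have hp := three_mul_eps_mul_pp k
  have : 0 ≤ 4 * eps k ^ 2 / (1 + eps k) := by positivity
  by_contra! hlt
  nlinarith

lemma uu_pos (k : ℕ) : 0 < uu k := by
  have := Real.sqrt_pos.2 (pp_pos k)
  unfold uu; positivity

lemma uu_add_inv_uu {k : ℕ} (hk : 2 ≤ k) : uu k + (uu k)⁻¹ = 2 * Real.sqrt (pp k) := by
  have hmul : uu k * (Real.sqrt (pp k) - Real.sqrt (pp k - 1)) = 1 := by
    have e₁ := Real.sq_sqrt (pp_pos k).le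
    have e₂ := Real.sq_sqrt (sub_nonneg.2 (one_le_pp hk))
    unfold uu; nlinarith
  rw [inv_eq_of_mul_eq_one_right hmul]; unfold uu; ring

lemma three_zpow_neg_succ (m : ℕ) : (3:ℝ) ^ (-((m:ℤ) + 1)) = 3 ^ (-(m:ℤ)) / 3 := by
  rw [neg_add, zpow_add₀ (by norm_num), zpow_neg_one, div_eq_mul_inv]

lemma sum_three_zpow_neg {k : ℕ} (hk : 1 ≤ k) :
    ∑ m ∈ Finset.range (k - 1), (3:ℝ) ^ (-(m:ℤ)) = 3 / 2 * (1 - 3 * eps k) := by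
  have hpow : ((3:ℝ)⁻¹) ^ (k - 1) = 3 * eps k := by
    rw [← three_zpow_one_sub, inv_pow, ← zpow_natCast, ← zpow_neg]
    congr 1; push_cast [Nat.cast_sub hk]; ring
  simp only [zpow_neg, zpow_natCast, ← inv_pow]
  rw [geom_sum_eq (by norm_num), hpow]; ring

@[fun_prop]
lemma integrable_indicator_Ico_const (c d C : ℝ) :
    Integrable (fun x => (Ico c d).indicator (fun _ => C) x) :=
  (integrableOn_const measure_Ico_lt_top.ne).integrable_indicator measurableSet_Ico

lemma integral_indicator_Ico_const (C : ℝ) {c d : ℝ} (h : c ≤ d) :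
    ∫ x, (Ico c d).indicator (fun _ => C) x = C * (d - c) := by
  rw [integral_indicator_const _ measurableSet_Ico, Real.volume_real_Ico_of_le h, smul_eq_mul,
    mul_comm]

section Weight

variable (k : ℕ)

lemma W_nonneg (ν : ℕ) {ω : ℝ} (hω : 0 ≤ ω) (a h x : ℝ) : 0 ≤ W k ν ω a h x := by
  induction ν generalizing ω a h with
  | zero =>
    have := Real.sqrt_pos.2 (pp_pos k)
    have := uu_pos k
    simp only [W]
    exact add_nonneg (indicator_nonneg (fun _ _ => by positivity) x)
      (indicator_nonneg (fun _ _ => by positivity) x)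
  | succ ν ih =>
    have := pp_pos k
    have := eps_pos k
    simp only [W]
    refine add_nonneg (add_nonneg (add_nonneg ?_ ?_) ?_) ?_
    · exact Finset.sum_nonneg fun _ _ => indicator_nonneg (fun _ _ => by positivity) x
    · exact indicator_nonneg (fun _ _ => by positivity) x
    · exact indicator_nonneg (fun _ _ => by positivity) x
    · exact Finset.sum_nonneg fun _ _ => ih (by positivity) _ _

variable {k}

lemma W_eq_zero_of_notMem (hk : 1 ≤ k) (ν : ℕ) (ω a : ℝ) {h x : ℝ} (hh : 0 ≤ h)
    (hx : x ∉ Ico a (a + h)) : W k ν ω a h x = 0 := by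
  induction ν generalizing ω a h with
  | zero =>
    simp only [W]
    rw [indicator_of_notMem, indicator_of_notMem, add_zero]
    · exact fun hm => hx (Ico_subset_Ico (by linarith) le_rfl hm)
    · exact fun hm => hx (Ico_subset_Ico le_rfl (by linarith) hm)
  | succ ν ih =>
    have hT : (3:ℝ) ^ (1 - (k:ℤ)) ≤ 1 := zpow_le_one_of_nonpos₀ (by norm_num) (by omega)
    have hTh := mul_le_of_le_one_left hh hT
    have hTh₀ : 0 ≤ (3:ℝ) ^ (1 - (k:ℤ)) * h := by positivity
    have ht (m : ℕ) : (3:ℝ) ^ (-(m:ℤ)) * h ≤ h :=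
      mul_le_of_le_one_left hh (zpow_le_one_of_nonpos₀ (by norm_num) (by omega))
    have ht₀ (m : ℕ) : 0 ≤ (3:ℝ) ^ (-(m:ℤ)) * h := by positivity
    simp only [W]
    rw [Finset.sum_eq_zero, Finset.sum_eq_zero, indicator_of_notMem, indicator_of_notMem]
    · ring
    · exact fun hm => hx (Ico_subset_Ico (by linarith) le_rfl hm)
    · exact fun hm => hx (Ico_subset_Ico (by linarith) (by linarith) hm)
    · intro m _
      refine ih _ _ (by linarith [ht₀ m]) fun hm => hx (Ico_subset_Ico ?_ ?_ hm)
      · linarith [ht m]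
      · linarith [ht₀ m]
    · intro m _
      exact indicator_of_notMem
        (fun hm => hx (Ico_subset_Ico (by linarith [ht m]) (by linarith [ht₀ m]) hm)) _

variable (k)

@[fun_prop]
lemma integrable_W (ν : ℕ) (ω a h : ℝ) : Integrable (W k ν ω a h) := by
  induction ν generalizing ω a h with
  | zero => simp only [W]; fun_prop
  | succ ν ih => simp only [W]; fun_prop

variable {k}

lemma integral_W_zero (hk : 2 ≤ k) (ω a : ℝ) {h : ℝ} (hh : 0 ≤ h) :
    ∫ x, W k 0 ω a h x = ω * h := by
  have hs := (Real.sqrt_pos.2 (pp_pos k)).ne'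
  have hu := (uu_pos k).ne'
  simp only [W]
  rw [integral_add (integrable_indicator_Ico_const _ _ _) (integrable_indicator_Ico_const _ _ _),
    integral_indicator_Ico_const _ (by linarith), integral_indicator_Ico_const _ (by linarith)]
  calc ω / √(pp k) * uu k * (a + h / 2 - a) + ω / √(pp k) / uu k * (a + h - (a + h / 2))
      = ω / √(pp k) * (uu k + (uu k)⁻¹) * (h / 2) := by field_simp; ring
    _ = ω * h := by rw [uu_add_inv_uu hk]; field_simp

lemma integral_W_succ (hk : 1 ≤ k) (ν : ℕ) (ω a : ℝ) {h : ℝ} (hh : 0 ≤ h) :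
    ∫ x, W k (ν + 1) ω a h x =
      ω / pp k * (∑ m ∈ Finset.range (k - 1), (3:ℝ) ^ (-(m:ℤ)) * h / 3) +
      ω / pp k * ((3:ℝ) ^ (1 - (k:ℤ)) * h * (2 / 3)) +
      4 * eps k / (1 + eps k) * (ω / pp k) * ((3:ℝ) ^ (1 - (k:ℤ)) * h / 3) +
      ∑ m ∈ Finset.range (k - 1),
        ∫ x, W k ν (2 * ω) (a + h - (2/3) * (3:ℝ) ^ (-(m:ℤ)) * h) ((1/3) * (3:ℝ) ^ (-(m:ℤ)) * h) x := by
  have hT : (3:ℝ) ^ (1 - (k:ℤ)) ≤ 1 := zpow_le_one_of_nonpos₀ (by norm_num) (by omega)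
  have hTh₀ : 0 ≤ (3:ℝ) ^ (1 - (k:ℤ)) * h := by positivity
  simp only [W]
  rw [integral_add, integral_add, integral_add, integral_finsetSum, integral_finsetSum,
    Finset.mul_sum, integral_indicator_Ico_const _ (by linarith),
    integral_indicator_Ico_const _ (by linarith)]
  · congr 3
    · refine Finset.sum_congr rfl fun m _ => ?_
      have : 0 ≤ (3:ℝ) ^ (-(m:ℤ)) * h := by positivity
      rw [integral_indicator_Ico_const _ (by linarith)]; ring
    · ring
    · ring
  all_goals fun_prop

lemma integral_W (hk : 2 ≤ k) (ν : ℕ) (ω a : ℝ) {h : ℝ} (hh : 0 ≤ h) :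
    ∫ x, W k ν ω a h x = ω * h := by
  induction ν generalizing ω a h with
  | zero => exact integral_W_zero hk ω a hh
  | succ ν ih =>
    have hε := (eps_pos k).ne'
    have hp := (pp_pos k).ne'
    have hε₁ : 1 + eps k ≠ 0 := by linarith [eps_pos k]
    have hgeom := sum_three_zpow_neg (k := k) (by omega)
    have hsum₁ : ∑ m ∈ Finset.range (k - 1), (3:ℝ) ^ (-(m:ℤ)) * h / 3 =
        h / 3 * (3 / 2 * (1 - 3 * eps k)) := by
      rw [← hgeom, Finset.mul_sum]; exact Finset.sum_congr rfl fun _ _ => by ring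
    have hsum₂ : ∑ m ∈ Finset.range (k - 1),
        ∫ x, W k ν (2 * ω) (a + h - (2/3) * (3:ℝ) ^ (-(m:ℤ)) * h) ((1/3) * (3:ℝ) ^ (-(m:ℤ)) * h) x =
        2 * ω * h / 3 * (3 / 2 * (1 - 3 * eps k)) := by
      rw [← hgeom, Finset.mul_sum]
      exact Finset.sum_congr rfl fun m _ => by rw [ih _ _ (by positivity)]; ring
    rw [integral_W_succ (by omega) ν ω a hh, hsum₁, hsum₂, three_zpow_one_sub]
    have hpp := three_mul_eps_mul_pp k
    field_simp at hpp ⊢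
    linear_combination (-ω * h) * hpp

lemma W_le_W_succ (ν : ℕ) {ω : ℝ} (hω : 0 ≤ ω) (a h : ℝ) {m : ℕ} (hm : m < k - 1) (x : ℝ) :
    W k ν (2 * ω) (a + h - (2/3) * (3:ℝ) ^ (-(m:ℤ)) * h) ((1/3) * (3:ℝ) ^ (-(m:ℤ)) * h) x
      ≤ W k (ν + 1) ω a h x := by
  have := pp_pos k
  have := eps_pos k
  have hchild := Finset.single_le_sum (f := fun m : ℕ =>
      W k ν (2 * ω) (a + h - (2/3) * (3:ℝ) ^ (-(m:ℤ)) * h) ((1/3) * (3:ℝ) ^ (-(m:ℤ)) * h) x)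
    (fun _ _ => W_nonneg k ν (by positivity) _ _ x) (Finset.mem_range.2 hm)
  simp only [W]
  refine hchild.trans (le_add_of_nonneg_left (add_nonneg (add_nonneg ?_ ?_) ?_))
  · exact Finset.sum_nonneg fun _ _ => indicator_nonneg (fun _ _ => by positivity) x
  · exact indicator_nonneg (fun _ _ => by positivity) x
  · exact indicator_nonneg (fun _ _ => by positivity) x

/-- The bound `c ≤ x - y` only serves to make the kernel integrable on `s`. -/
lemma setIntegral_div_le_setIntegral_div_sub {f : ℝ → ℝ} {s : Set ℝ} (hs : MeasurableSet s)
    (hf : IntegrableOn f s) (hf₀ : ∀ y ∈ s, 0 ≤ f y) {x c L : ℝ} (hc : 0 < c)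
    (hxy : ∀ y ∈ s, c ≤ x - y ∧ x - y ≤ L) :
    (∫ y in s, f y) / L ≤ ∫ y in s, f y / (x - y) := by
  have hint : IntegrableOn (fun y => f y / (x - y)) s := by
    refine Integrable.mono' (hf.div_const c)
      (hf.aemeasurable.div (by fun_prop : Measurable fun y => x - y).aemeasurable).aestronglyMeasurable
      (ae_restrict_of_forall_mem hs fun y hy => ?_)
    rw [norm_div, Real.norm_of_nonneg (hf₀ y hy), Real.norm_of_nonneg (by linarith [hxy y hy])]
    exact div_le_div_of_nonneg_left (hf₀ y hy) hc (hxy y hy).1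
  rw [← integral_div]
  exact setIntegral_mono_on (hf.div_const L) hint hs fun y hy =>
    div_le_div_of_nonneg_left (hf₀ y hy) (hc.trans_le (hxy y hy).1) (hxy y hy).2

lemma le_setIntegral_W_succ (hk : 2 ≤ k) (ν : ℕ) {ω : ℝ} (hω : 0 ≤ ω) (a : ℝ) {h : ℝ}
    (hh : 0 ≤ h) {m : ℕ} (hm : m < k - 1) :
    2 * ω * ((1/3) * (3:ℝ) ^ (-(m:ℤ)) * h) ≤
      ∫ y in Ico (a + h - (3:ℝ) ^ (-(m:ℤ)) * h) (a + h - (3:ℝ) ^ (-((m:ℤ) + 1)) * h),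
        W k (ν + 1) ω a h y := by
  have ht : 0 ≤ (3:ℝ) ^ (-(m:ℤ)) * h := by positivity
  have hsub : Ico (a + h - (2/3) * (3:ℝ) ^ (-(m:ℤ)) * h)
      (a + h - (2/3) * (3:ℝ) ^ (-(m:ℤ)) * h + (1/3) * (3:ℝ) ^ (-(m:ℤ)) * h) ⊆
      Ico (a + h - (3:ℝ) ^ (-(m:ℤ)) * h) (a + h - (3:ℝ) ^ (-((m:ℤ) + 1)) * h) := by
    rw [three_zpow_neg_succ]
    exact Ico_subset_Ico (by linarith) (by linarith)
  calc 2 * ω * ((1/3) * (3:ℝ) ^ (-(m:ℤ)) * h)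
      = ∫ y in Ico (a + h - (2/3) * (3:ℝ) ^ (-(m:ℤ)) * h)
          (a + h - (2/3) * (3:ℝ) ^ (-(m:ℤ)) * h + (1/3) * (3:ℝ) ^ (-(m:ℤ)) * h),
          W k ν (2 * ω) (a + h - (2/3) * (3:ℝ) ^ (-(m:ℤ)) * h) ((1/3) * (3:ℝ) ^ (-(m:ℤ)) * h) y := by
        rw [setIntegral_eq_integral_of_forall_compl_eq_zero
          fun y hy => W_eq_zero_of_notMem (by omega) ν _ _ (by positivity) hy,
          integral_W hk ν _ _ (by positivity)]
    _ ≤ ∫ y in Ico (a + h - (2/3) * (3:ℝ) ^ (-(m:ℤ)) * h)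
          (a + h - (2/3) * (3:ℝ) ^ (-(m:ℤ)) * h + (1/3) * (3:ℝ) ^ (-(m:ℤ)) * h),
          W k (ν + 1) ω a h y :=
        setIntegral_mono (integrable_W k _ _ _ _).integrableOn (integrable_W k _ _ _ _).integrableOn
          (W_le_W_succ ν hω a h hm)
    _ ≤ _ := setIntegral_mono_set (integrable_W k _ _ _ _).integrableOn
          (.of_forall (W_nonneg k _ hω a h)) hsub.eventuallyLE

lemma two_thirds_mul_le_setIntegral_W_succ_div_sub (hk : 2 ≤ k) (ν : ℕ) {ω : ℝ} (hω : 0 ≤ ω)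
    (a : ℝ) {h : ℝ} (hh : 0 < h) {x : ℝ}
    (hx : x ∈ Ico (a + h - (3:ℝ) ^ (-(k:ℤ)) * h) (a + h - (3:ℝ) ^ (-(k:ℤ)) * h / 2))
    {m : ℕ} (hm : m < k - 1) :
    2 / 3 * ω ≤
      ∫ y in Ico (a + h - (3:ℝ) ^ (-(m:ℤ)) * h) (a + h - (3:ℝ) ^ (-((m:ℤ) + 1)) * h),
        W k (ν + 1) ω a h y / (x - y) := by
  have hkm : (3:ℝ) ^ (-(k:ℤ)) * h < (3:ℝ) ^ (-(m:ℤ)) / 3 * h := by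
    rw [← three_zpow_neg_succ]
    exact mul_lt_mul_of_pos_right (zpow_lt_zpow_right₀ (by norm_num) (by omega)) hh
  have hkh : 0 < (3:ℝ) ^ (-(k:ℤ)) * h := by positivity
  refine le_trans ?_ (setIntegral_div_le_setIntegral_div_sub measurableSet_Ico
    (integrable_W k _ _ _ _).integrableOn (fun y _ => W_nonneg k _ hω a h y)
    (c := (3:ℝ) ^ (-(m:ℤ)) / 3 * h - (3:ℝ) ^ (-(k:ℤ)) * h) (L := (3:ℝ) ^ (-(m:ℤ)) * h)
    (by linarith) fun y hy => ?_)
  · rw [le_div_iff₀ (by positivity)]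
    refine le_of_eq_of_le ?_ (le_setIntegral_W_succ hk ν hω a hh.le hm)
    ring
  · rw [three_zpow_neg_succ] at hy
    constructor <;> linarith [hx.1, hx.2, hy.1, hy.2]

end Weight

/-- Main lower bound term: if `J = [a, a+h)` carries `w_{n−l}` (so `w = W k ν (2^l) a h`
on `J` with `ν = n − l ≥ 1`), and `x` lies in the left half of the tail interval
`J_{k−1}^{(3)}`, then for each `0 ≤ m ≤ k−2`,
`H(wχ_{J_m∖J_{m+1}})(x) = ∫_{J_m∖J_{m+1}} w(y)/(x−y) dy ≥ w(J_m^{(2)})/|J_m| = (2/3)·2^l`,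
and consequently `B(x) = Σ_{m=0}^{k−2} H(wχ_{J_m∖J_{m+1}})(x) ≥ (2/3)(k−1)·2^l`. -/
theorem hilbert_lower_bound_B (k : ℕ) (hk : 2 ≤ k) (ν : ℕ) (hν : 1 ≤ ν) (l : ℕ)
    (a h : ℝ) (hh : 0 < h) (x : ℝ)
    (hx : x ∈ Set.Ico (a + h - (3:ℝ)^(-(k:ℤ))*h) (a + h - (3:ℝ)^(-(k:ℤ))*h/2)) :
    (∀ m < k - 1,
      (2/3) * (2:ℝ)^l ≤
        ∫ y in Set.Ico (a + h - (3:ℝ)^(-(m:ℤ))*h) (a + h - (3:ℝ)^(-((m:ℤ)+1))*h),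
          W k ν ((2:ℝ)^l) a h y / (x - y)) ∧
    (2/3) * ((k:ℝ) - 1) * (2:ℝ)^l ≤
      ∑ m ∈ Finset.range (k-1),
        ∫ y in Set.Ico (a + h - (3:ℝ)^(-(m:ℤ))*h) (a + h - (3:ℝ)^(-((m:ℤ)+1))*h),
          W k ν ((2:ℝ)^l) a h y / (x - y) := by
  obtain ⟨ν, rfl⟩ : ∃ μ, ν = μ + 1 := ⟨ν - 1, by omega⟩
  have hpiece : ∀ m < k - 1, 2 / 3 * (2:ℝ) ^ l ≤
      ∫ y in Ico (a + h - (3:ℝ) ^ (-(m:ℤ)) * h) (a + h - (3:ℝ) ^ (-((m:ℤ) + 1)) * h),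
        W k (ν + 1) ((2:ℝ) ^ l) a h y / (x - y) := fun m hm =>
    two_thirds_mul_le_setIntegral_W_succ_div_sub hk ν (by positivity) a hh hx hm
  refine ⟨hpiece, ?_⟩
  calc 2 / 3 * ((k:ℝ) - 1) * 2 ^ l = (Finset.range (k - 1)).card • (2 / 3 * (2:ℝ) ^ l) := by
        rw [Finset.card_range, nsmul_eq_mul, Nat.cast_sub (by omega)]; push_cast; ring
    _ ≤ _ := Finset.card_nsmul_le_sum _ _ _ fun m hm => hpiece m (Finset.mem_range.1 hm)
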